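/- Let n be a unit vector in R^3, T_w > 0, T_0 > 0, r_perp in (0,1], r_parallel in (0,2). Then ∫_{ {v ∈ R^3 : n·v < 0} } ( μ_{r_parallel,r_perp}(v) - μ_0(v) ) |n·v| dv = 0, where μ_0(v) = (1/(2π T_0^2)) e^{-|v|^2/(2T_0)} and μ_{r_parallel,r_perp}(v) = (1/(2π [T_0 (1-r_parallel)^2 + T_w r_parallel (2-r_parallel)])) · exp( -|v_parallel|^2 / (2 [T_0 (1-r_parallel)^2 + T_w r_parallel (2-r_parallel)]) ) · (1/(T_0 (1-r_perp) + T_w r_perp)) · exp( -|v_perp|^2 / (2 [T_0 (1-r_perp) + T_w r_perp]) ). -/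

import Mathlib

open MeasureTheory Real

/-- The global Maxwellian with temperature `T₀`:
`μ₀(v) = (1/(2πT₀²)) e^{-|v|²/(2T₀)}`. -/
noncomputable def maxwellian (T0 : ℝ) (v : EuclideanSpace ℝ (Fin 3)) : ℝ :=
  (1 / (2 * Real.pi * T0 ^ 2)) * Real.exp (-‖v‖ ^ 2 / (2 * T0))

/-- The wall Maxwellian `μ_{x,r_∥,r_⊥}` associated with the C-L boundary
condition. -/
noncomputable def CLwallMaxwellian (n : EuclideanSpace ℝ (Fin 3)) (T0 Tw rPerp rPar : ℝ)
    (v : EuclideanSpace ℝ (Fin 3)) : ℝ :=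
  (1 / (2 * Real.pi * (T0 * (1 - rPar) ^ 2 + Tw * rPar * (2 - rPar))))
    * Real.exp (-‖v - (inner ℝ n v : ℝ) • n‖ ^ 2
        / (2 * (T0 * (1 - rPar) ^ 2 + Tw * rPar * (2 - rPar))))
    * (1 / (T0 * (1 - rPerp) + Tw * rPerp))
    * Real.exp (-(inner ℝ n v : ℝ) ^ 2 / (2 * (T0 * (1 - rPerp) + Tw * rPerp)))

/-!
The wall Maxwellian and `μ₀` are both Gaussians `splitMaxwellian n Tpar Tperp` with a tangential
temperature `Tpar` and a normal temperature `Tperp` (for `μ₀`, `Tpar = Tperp = T₀`), and every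
such Gaussian has unit incoming flux. Indeed, in orthonormal coordinates whose first axis is `n`,
`splitMaxwellian n Tpar Tperp v * |n·v|` on `{n·v < 0}` is a product of one-dimensional factors:
the two tangential ones integrate to `√(2π Tpar)` each and the normal one,
`∫_{t<0} |t| e^{-t²/(2 Tperp)} dt`, to `Tperp`, which cancels the normalization
`1 / (2π Tpar Tperp)`. So the two incoming fluxes agree.
-/

open Set

theorem integral_Ioi_mul_exp_neg_mul_sq {b : ℝ} (hb : 0 < b) :
    ∫ x in Ioi (0 : ℝ), x * exp (-b * x ^ 2) = (2 * b)⁻¹ := by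
  have h := integral_mul_cexp_neg_mul_sq (b := (b : ℂ)) (by simpa using hb)
  have hreal : (fun r : ℝ => (r : ℂ) * Complex.exp (-(b : ℂ) * (r : ℂ) ^ 2))
      = fun r => ((r * exp (-b * r ^ 2) : ℝ) : ℂ) := by
    ext r; push_cast; rfl
  rw [hreal, integral_complex_ofReal] at h
  exact_mod_cast h

theorem integral_Iio_abs_mul_exp_neg_mul_sq {b : ℝ} (hb : 0 < b) :
    ∫ x in Iio (0 : ℝ), |x| * exp (-b * x ^ 2) = (2 * b)⁻¹ := by
  have hsymm : ∀ x ∈ Ioi (0 : ℝ), |-x| * exp (-b * (-x) ^ 2) = x * exp (-b * x ^ 2) := by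
    intro x hx
    rw [abs_neg, abs_of_pos hx, neg_sq]
  rw [← integral_Iic_eq_integral_Iio, ← neg_zero, ← integral_comp_neg_Ioi,
    setIntegral_congr_fun measurableSet_Ioi hsymm, integral_Ioi_mul_exp_neg_mul_sq hb]

theorem exp_neg_sq_div_eq (A t : ℝ) : exp (-t ^ 2 / (2 * A)) = exp (-(2 * A)⁻¹ * t ^ 2) := by
  ring_nf

theorem integrable_exp_neg_sq_div {A : ℝ} (hA : 0 < A) :
    Integrable fun t : ℝ => exp (-t ^ 2 / (2 * A)) := by
  simpa only [exp_neg_sq_div_eq] using integrable_exp_neg_mul_sq (by positivity : 0 < (2 * A)⁻¹)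

theorem integral_exp_neg_sq_div (A : ℝ) :
    ∫ t : ℝ, exp (-t ^ 2 / (2 * A)) = √(2 * π * A) := by
  simp only [exp_neg_sq_div_eq, integral_gaussian, div_inv_eq_mul]
  ring_nf

theorem integrable_indicator_Iio_abs_mul_exp_neg_sq_div {B : ℝ} (hB : 0 < B) :
    Integrable ((Iio 0).indicator fun t : ℝ => |t| * exp (-t ^ 2 / (2 * B))) := by
  refine (integrable_indicator_iff measurableSet_Iio).2 (Integrable.integrableOn ?_)
  simpa only [exp_neg_sq_div_eq, abs_mul, abs_of_pos (exp_pos _)] using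
    (integrable_mul_exp_neg_mul_sq (by positivity : 0 < (2 * B)⁻¹)).abs

theorem integral_indicator_Iio_abs_mul_exp_neg_sq_div {B : ℝ} (hB : 0 < B) :
    ∫ t, (Iio 0).indicator (fun t : ℝ => |t| * exp (-t ^ 2 / (2 * B))) t = B := by
  rw [integral_indicator measurableSet_Iio]
  simp only [exp_neg_sq_div_eq]
  rw [integral_Iio_abs_mul_exp_neg_mul_sq (by positivity)]
  field_simp

section Euclidean

variable {ι : Type*} [Fintype ι]

theorem EuclideanSpace.integral_fintype_prod_eq_prod (f : ι → ℝ → ℝ) :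
    ∫ x : EuclideanSpace ℝ ι, ∏ i, f i (x i) = ∏ i, ∫ t, f i t := by
  rw [← (PiLp.volume_preserving_toLp ι).integral_comp
    (MeasurableEquiv.toLp 2 (ι → ℝ)).measurableEmbedding]
  exact integral_fintype_prod_volume_eq_prod f

theorem EuclideanSpace.integrable_fintype_prod {f : ι → ℝ → ℝ} (hf : ∀ i, Integrable (f i)) :
    Integrable fun x : EuclideanSpace ℝ ι => ∏ i, f i (x i) :=
  ((PiLp.volume_preserving_toLp ι).integrable_comp_emb
    (MeasurableEquiv.toLp 2 (ι → ℝ)).measurableEmbedding).1 (Integrable.fintype_prod hf)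

theorem EuclideanSpace.exists_linearIsometryEquiv_inner_eq_apply [DecidableEq ι] (i : ι)
    {n : EuclideanSpace ℝ ι} (hn : ‖n‖ = 1) :
    ∃ R : EuclideanSpace ℝ ι ≃ₗᵢ[ℝ] EuclideanSpace ℝ ι, ∀ v, inner ℝ n v = R v i := by
  set R := (ℝ ∙ (n - single i (1 : ℝ)))ᗮ.reflection
  have hR : R n = single i 1 := Submodule.reflection_sub (by rw [hn, PiLp.norm_single, norm_one])
  refine ⟨R, fun v => ?_⟩
  rw [← R.inner_map_map, hR, inner_single_left]
  simp

end Euclidean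

theorem norm_sub_inner_smul_sq {E : Type*} [NormedAddCommGroup E] [InnerProductSpace ℝ E]
    {n : E} (hn : ‖n‖ = 1) (v : E) :
    ‖v - inner ℝ n v • n‖ ^ 2 = ‖v‖ ^ 2 - inner ℝ n v ^ 2 := by
  rw [norm_sub_sq_real, real_inner_smul_right, real_inner_comm, norm_smul, hn,
    Real.norm_eq_abs, mul_one, sq_abs]
  ring

noncomputable def splitMaxwellian (n : EuclideanSpace ℝ (Fin 3)) (Tpar Tperp : ℝ)
    (v : EuclideanSpace ℝ (Fin 3)) : ℝ :=
  (1 / (2 * π * Tpar)) * exp (-‖v - inner ℝ n v • n‖ ^ 2 / (2 * Tpar))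
    * (1 / Tperp) * exp (-inner ℝ n v ^ 2 / (2 * Tperp))

theorem CLwallMaxwellian_eq_splitMaxwellian (n : EuclideanSpace ℝ (Fin 3))
    (T0 Tw rPerp rPar : ℝ) :
    CLwallMaxwellian n T0 Tw rPerp rPar =
      splitMaxwellian n (T0 * (1 - rPar) ^ 2 + Tw * rPar * (2 - rPar))
        (T0 * (1 - rPerp) + Tw * rPerp) :=
  rfl

theorem maxwellian_eq_splitMaxwellian {n : EuclideanSpace ℝ (Fin 3)} (hn : ‖n‖ = 1) (T : ℝ) :
    maxwellian T = splitMaxwellian n T T := by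
  ext v
  have hexp : exp (-(‖v‖ ^ 2 - inner ℝ n v ^ 2) / (2 * T)) * exp (-inner ℝ n v ^ 2 / (2 * T))
      = exp (-‖v‖ ^ 2 / (2 * T)) := by
    rw [← exp_add]; ring_nf
  rw [maxwellian, splitMaxwellian, norm_sub_inner_smul_sq hn, ← hexp]
  ring

noncomputable def incomingFluxFactor (Tpar Tperp : ℝ) : Fin 3 → ℝ → ℝ :=
  ![(Iio 0).indicator fun t => |t| * exp (-t ^ 2 / (2 * Tperp)),
    fun t => exp (-t ^ 2 / (2 * Tpar)), fun t => exp (-t ^ 2 / (2 * Tpar))]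

theorem integrable_incomingFluxFactor {Tpar Tperp : ℝ} (hTpar : 0 < Tpar) (hTperp : 0 < Tperp)
    (i : Fin 3) : Integrable (incomingFluxFactor Tpar Tperp i) := by
  fin_cases i
  · exact integrable_indicator_Iio_abs_mul_exp_neg_sq_div hTperp
  · exact integrable_exp_neg_sq_div hTpar
  · exact integrable_exp_neg_sq_div hTpar

theorem prod_integral_incomingFluxFactor {Tpar Tperp : ℝ} (hTpar : 0 < Tpar)
    (hTperp : 0 < Tperp) :
    ∏ i, ∫ t, incomingFluxFactor Tpar Tperp i t = 2 * π * Tpar * Tperp := by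
  simp only [Fin.prod_univ_three, incomingFluxFactor, Matrix.cons_val_zero, Matrix.cons_val_one,
    Matrix.cons_val_two, Matrix.head_cons, Matrix.tail_cons,
    integral_indicator_Iio_abs_mul_exp_neg_sq_div hTperp, integral_exp_neg_sq_div]
  rw [mul_assoc, mul_self_sqrt (by positivity)]
  ring

theorem exists_indicator_splitMaxwellian_mul_abs_inner_eq {n : EuclideanSpace ℝ (Fin 3)}
    (hn : ‖n‖ = 1) (Tpar Tperp : ℝ) :
    ∃ R : EuclideanSpace ℝ (Fin 3) ≃ₗᵢ[ℝ] EuclideanSpace ℝ (Fin 3), ∀ v,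
      {v | inner ℝ n v < 0}.indicator (fun v => splitMaxwellian n Tpar Tperp v * |inner ℝ n v|) v
        = 1 / (2 * π * Tpar) * (1 / Tperp) * ∏ i, incomingFluxFactor Tpar Tperp i (R v i) := by
  obtain ⟨R, hR⟩ := EuclideanSpace.exists_linearIsometryEquiv_inner_eq_apply 0 hn
  refine ⟨R, fun v => ?_⟩
  have hnorm : ‖v‖ ^ 2 = R v 0 ^ 2 + R v 1 ^ 2 + R v 2 ^ 2 := by
    rw [← R.norm_map, EuclideanSpace.norm_sq_eq, Fin.sum_univ_three]
    simp only [Real.norm_eq_abs, sq_abs]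
  have hpar : exp (-(R v 0 ^ 2 + R v 1 ^ 2 + R v 2 ^ 2 - R v 0 ^ 2) / (2 * Tpar))
      = exp (-R v 1 ^ 2 / (2 * Tpar)) * exp (-R v 2 ^ 2 / (2 * Tpar)) := by
    rw [← exp_add]; ring_nf
  simp only [indicator_apply, mem_ofPred_eq, splitMaxwellian, norm_sub_inner_smul_sq hn]
  simp only [hR, hnorm, hpar, Fin.prod_univ_three, incomingFluxFactor, Matrix.cons_val_zero,
    Matrix.cons_val_one, Matrix.cons_val_two, Matrix.head_cons, Matrix.tail_cons, indicator_apply,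
    mem_Iio]
  split_ifs <;> ring

section Flux

variable {n : EuclideanSpace ℝ (Fin 3)} {Tpar Tperp : ℝ}

theorem integrableOn_splitMaxwellian_mul_abs_inner (hn : ‖n‖ = 1) (hTpar : 0 < Tpar)
    (hTperp : 0 < Tperp) :
    IntegrableOn (fun v => splitMaxwellian n Tpar Tperp v * |inner ℝ n v|)
      {v | inner ℝ n v < 0} := by
  obtain ⟨R, hR⟩ := exists_indicator_splitMaxwellian_mul_abs_inner_eq hn Tpar Tperp
  rw [← integrable_indicator_iff (measurableSet_lt (by fun_prop) measurable_const), funext hR]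
  exact (R.measurePreserving.integrable_comp_emb R.toHomeomorph.measurableEmbedding).2
    ((EuclideanSpace.integrable_fintype_prod
      (integrable_incomingFluxFactor hTpar hTperp)).const_mul _)

theorem setIntegral_splitMaxwellian_mul_abs_inner (hn : ‖n‖ = 1) (hTpar : 0 < Tpar)
    (hTperp : 0 < Tperp) :
    ∫ v in {v | inner ℝ n v < 0}, splitMaxwellian n Tpar Tperp v * |inner ℝ n v| = 1 := by
  obtain ⟨R, hR⟩ := exists_indicator_splitMaxwellian_mul_abs_inner_eq hn Tpar Tperp
  rw [← integral_indicator (measurableSet_lt (by fun_prop) measurable_const), funext hR,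
    R.measurePreserving.integral_comp R.toHomeomorph.measurableEmbedding
      (fun w => 1 / (2 * π * Tpar) * (1 / Tperp) * ∏ i, incomingFluxFactor Tpar Tperp i (w i)),
    integral_const_mul, EuclideanSpace.integral_fintype_prod_eq_prod,
    prod_integral_incomingFluxFactor hTpar hTperp]
  field_simp

end Flux

/-- The incoming flux of the difference between the wall Maxwellian and the
global Maxwellian vanishes: `∫_{n·v<0} (μ_{r_∥,r_⊥}(v) - μ₀(v)) |n·v| dv = 0`. -/
theorem CL_wallMaxwellian_sub_maxwellian_flux_zero
    (n : EuclideanSpace ℝ (Fin 3)) (hn : ‖n‖ = 1)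
    (Tw T0 : ℝ) (hTw : 0 < Tw) (hT0 : 0 < T0) (rPerp rPar : ℝ)
    (hrPerp : 0 < rPerp) (hrPerp' : rPerp ≤ 1)
    (hrPar : 0 < rPar) (hrPar' : rPar < 2) :
    ∫ v in {v : EuclideanSpace ℝ (Fin 3) | (inner ℝ n v : ℝ) < 0},
        (CLwallMaxwellian n T0 Tw rPerp rPar v - maxwellian T0 v)
          * |(inner ℝ n v : ℝ)| = 0 := by
  have hTpar : 0 < T0 * (1 - rPar) ^ 2 + Tw * rPar * (2 - rPar) :=
    add_pos_of_nonneg_of_pos (by positivity) (mul_pos (mul_pos hTw hrPar) (by linarith))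
  have hTperp : 0 < T0 * (1 - rPerp) + Tw * rPerp :=
    add_pos_of_nonneg_of_pos (mul_nonneg hT0.le (by linarith)) (mul_pos hTw hrPerp)
  rw [CLwallMaxwellian_eq_splitMaxwellian, maxwellian_eq_splitMaxwellian hn]
  simp only [sub_mul]
  rw [integral_sub (integrableOn_splitMaxwellian_mul_abs_inner hn hTpar hTperp)
      (integrableOn_splitMaxwellian_mul_abs_inner hn hT0 hT0),
    setIntegral_splitMaxwellian_mul_abs_inner hn hTpar hTperp,
    setIntegral_splitMaxwellian_mul_abs_inner hn hT0 hT0, sub_self]
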